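/- (Weyl condition for aligned pure radiation) If g is a pure radiation metric with parallel rays spanned by K, then its Weyl tensor satisfies C_{abcd} K^a X^b = 0 for all vector fields X orthogonal to K. -/

import Mathlib

/- A coordinate-chart framework for pseudo-Riemannian geometry on ℝⁿ:
metric, Christoffel symbols, covariant derivatives, curvature, Ricci,
Schouten, Weyl, Cotton and Bach tensors, and the standard tractor
connection, all written in index notation. -/

noncomputable section

open scoped BigOperators

/-- Points of the chart ℝⁿ. -/
abbrev Pt (n : ℕ) := Fin n → ℝ

/-- Partial derivative of a scalar function in the coordinate direction `a`. -/
def pd {n : ℕ} (a : Fin n) (f : Pt n → ℝ) (x : Pt n) : ℝ :=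
  fderiv ℝ f x (Pi.single a 1)

/-- A smooth vector field. -/
def SmoothVF {n : ℕ} (K : Pt n → Pt n) : Prop := ∀ b, ContDiff ℝ (⊤ : ℕ∞) (fun x => K x b)

/-- A smooth one-form. -/
def SmoothForm {n : ℕ} (f : Pt n → Fin n → ℝ) : Prop := ∀ b, ContDiff ℝ (⊤ : ℕ∞) (fun x => f x b)

/-- A pseudo-Riemannian metric (of arbitrary signature) in a global
coordinate chart on ℝⁿ, given by its components `g x a b`, together with the
components `ginv` of its pointwise inverse. -/
structure MetricG (n : ℕ) where
  g : Pt n → Fin n → Fin n → ℝ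
  ginv : Pt n → Fin n → Fin n → ℝ
  symm : ∀ x a b, g x a b = g x b a
  smooth : ∀ a b, ContDiff ℝ (⊤ : ℕ∞) (fun x => g x a b)
  inv_mul : ∀ x a c, (∑ b, ginv x a b * g x b c) = if a = c then (1:ℝ) else 0

namespace MetricG

variable {n : ℕ} (G : MetricG n)

/-- The inner product of two tangent vectors at `x`. -/
def ip (x : Pt n) (X Y : Pt n) : ℝ := ∑ a, ∑ b, G.g x a b * X a * Y b

/-- Christoffel symbols Γ^c_{ab} of the Levi-Civita connection. -/
def Γ (c a b : Fin n) (x : Pt n) : ℝ :=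
  (1/2) * ∑ d, G.ginv x c d *
    (pd a (fun y => G.g y d b) x + pd b (fun y => G.g y d a) x - pd d (fun y => G.g y a b) x)

/-- Covariant derivative (∇_a X)^b of a vector field. -/
def covVec (X : Pt n → Pt n) (a b : Fin n) (x : Pt n) : ℝ :=
  pd a (fun y => X y b) x + ∑ c, G.Γ b a c x * X x c

/-- Covariant derivative ∇_a ω_b of a one-form. -/
def cov1 (ω : Pt n → Fin n → ℝ) (a b : Fin n) (x : Pt n) : ℝ :=
  pd a (fun y => ω y b) x - ∑ e, G.Γ e a b x * ω x e

/-- Covariant derivative ∇_a T_{bc} of a (0,2)-tensor field. -/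
def cov2 (T : Pt n → Fin n → Fin n → ℝ) (a b c : Fin n) (x : Pt n) : ℝ :=
  pd a (fun y => T y b c) x - ∑ e, G.Γ e a b x * T x e c - ∑ e, G.Γ e a c x * T x b e

/-- Covariant derivative ∇_a T_{bcd} of a (0,3)-tensor field. -/
def cov3 (T : Pt n → Fin n → Fin n → Fin n → ℝ) (a b c d : Fin n) (x : Pt n) : ℝ :=
  pd a (fun y => T y b c d) x - ∑ e, G.Γ e a b x * T x e c d
    - ∑ e, G.Γ e a c x * T x b e d - ∑ e, G.Γ e a d x * T x b c e

/-- Curvature tensor R_{ab}{}^c{}_d, with the convention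
`(∇_a∇_b − ∇_b∇_a)X^c = R_{ab}{}^c{}_d X^d`. -/
def Riem (a b c d : Fin n) (x : Pt n) : ℝ :=
  pd a (fun y => G.Γ c b d y) x - pd b (fun y => G.Γ c a d y) x
    + ∑ e, (G.Γ c a e x * G.Γ e b d x - G.Γ c b e x * G.Γ e a d x)

/-- (4,0)-curvature tensor R_{abcd} = g_{ce} R_{ab}{}^e{}_d. -/
def Riem4 (a b c d : Fin n) (x : Pt n) : ℝ :=
  ∑ e, G.g x c e * G.Riem a b e d x

/-- Ricci tensor R_{bd} = R_{cb}{}^c{}_d. -/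
def Ricci (b d : Fin n) (x : Pt n) : ℝ := ∑ c, G.Riem c b c d x

/-- Scalar curvature R = g^{ab} R_{ab}. -/
def Scal (x : Pt n) : ℝ := ∑ a, ∑ b, G.ginv x a b * G.Ricci a b x

/-- Schouten tensor P_{ab} = (1/(n−2)) (R_{ab} − R/(2(n−1)) g_{ab}). -/
def Schouten (a b : Fin n) (x : Pt n) : ℝ :=
  (1 / ((n : ℝ) - 2)) * (G.Ricci a b x - G.Scal x / (2 * ((n : ℝ) - 1)) * G.g x a b)

/-- Weyl tensor C_{abcd} = R_{abcd} − 2(g_{c[a}P_{b]d} + g_{d[b}P_{a]c}). -/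
def Weyl (a b c d : Fin n) (x : Pt n) : ℝ :=
  G.Riem4 a b c d x -
    (G.g x c a * G.Schouten b d x - G.g x c b * G.Schouten a d x
      + G.g x d b * G.Schouten a c x - G.g x d a * G.Schouten b c x)

/-- Cotton tensor A_{abc} = ∇_b P_{ca} − ∇_c P_{ba} (= 2∇_{[b}P_{c]a}). -/
def Cotton (a b c : Fin n) (x : Pt n) : ℝ :=
  G.cov2 (fun y i j => G.Schouten i j y) b c a x - G.cov2 (fun y i j => G.Schouten i j y) c b a x

/-- Bach tensor B_{ab} = ∇^c A_{acb} + P^{dc} C_{dacb}. -/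
def Bach (a b : Fin n) (x : Pt n) : ℝ :=
  (∑ c, ∑ e, G.ginv x c e * G.cov3 (fun y i j k => G.Cotton i j k y) e a c b x)
    + ∑ d, ∑ c, (∑ i, ∑ j, G.ginv x d i * G.ginv x c j * G.Schouten i j x) * G.Weyl d a c b x

/-- `K` is a null vector field. -/
def IsNull (K : Pt n → Pt n) : Prop := ∀ x, G.ip x (K x) (K x) = 0

/-- Pure radiation condition: Ric(X,·) = 0 for every vector X orthogonal to K. -/
def PureRadiation (K : Pt n → Pt n) : Prop :=
  ∀ x (X : Pt n), G.ip x (K x) X = 0 → ∀ b, (∑ a, G.Ricci a b x * X a) = 0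

/-- Parallel rays condition: ∇_a K^b = f_a K^b. -/
def ParallelRays (K : Pt n → Pt n) (f : Pt n → Fin n → ℝ) : Prop :=
  ∀ x a b, G.covVec K a b x = f x a * K x b

/-- first (ℝ-) component of the tractor derivative of the tractor (ρ, X, σ):
∇_a ρ − P_{ab} X^b. -/
def trD0 (ρ : Pt n → ℝ) (X : Pt n → Pt n) (a : Fin n) (x : Pt n) : ℝ :=
  pd a ρ x - ∑ b, G.Schouten a b x * X x b

/-- middle (TM-) component of the tractor derivative of the tractor (ρ, X, σ):
∇_a X^b + ρ δ_a{}^b + σ P_a{}^b. -/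
def trD1 (ρ : Pt n → ℝ) (X : Pt n → Pt n) (σ : Pt n → ℝ) (a b : Fin n) (x : Pt n) : ℝ :=
  G.covVec X a b x + ρ x * (if a = b then (1:ℝ) else 0)
    + σ x * ∑ e, G.ginv x b e * G.Schouten a e x

/-- last (ℝ-) component of the tractor derivative of the tractor (ρ, X, σ):
∇_a σ − g_{ab} X^b. -/
def trD2 (X : Pt n → Pt n) (σ : Pt n → ℝ) (a : Fin n) (x : Pt n) : ℝ :=
  pd a σ x - ∑ b, G.g x a b * X x b

end MetricG

section Aux
open Finset

variable {n : ℕ}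

/-! ### `pd` calculus -/

lemma pd_congr {f g : Pt n → ℝ} (h : ∀ y, f y = g y) (a : Fin n) (x : Pt n) :
    pd a f x = pd a g x := by
  have : f = g := funext h
  rw [this]

lemma pd_add {f g : Pt n → ℝ} (a : Fin n) (x : Pt n)
    (hf : DifferentiableAt ℝ f x) (hg : DifferentiableAt ℝ g x) :
    pd a (fun y => f y + g y) x = pd a f x + pd a g x := by
  simp [pd, fderiv_fun_add hf hg]

lemma pd_sub {f g : Pt n → ℝ} (a : Fin n) (x : Pt n)
    (hf : DifferentiableAt ℝ f x) (hg : DifferentiableAt ℝ g x) :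
    pd a (fun y => f y - g y) x = pd a f x - pd a g x := by
  simp [pd, fderiv_fun_sub hf hg]

lemma pd_mul {f g : Pt n → ℝ} (a : Fin n) (x : Pt n)
    (hf : DifferentiableAt ℝ f x) (hg : DifferentiableAt ℝ g x) :
    pd a (fun y => f y * g y) x = pd a f x * g x + f x * pd a g x := by
  simp [pd, fderiv_fun_mul hf hg]; ring

lemma pd_sum {ι : Type*} (s : Finset ι) (f : ι → Pt n → ℝ) (a : Fin n) (x : Pt n)
    (hf : ∀ i ∈ s, DifferentiableAt ℝ (f i) x) :
    pd a (fun y => ∑ i ∈ s, f i y) x = ∑ i ∈ s, pd a (f i) x := by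
  simp [pd, fderiv_fun_sum hf]

lemma contDiff_pd {f : Pt n → ℝ} (hf : ContDiff ℝ (⊤ : ℕ∞) f) (a : Fin n) :
    ContDiff ℝ (⊤ : ℕ∞) (fun x => pd a f x) := by
  have h1 : ContDiff ℝ (⊤ : ℕ∞) (fderiv ℝ f) := hf.fderiv_right (by simp)
  exact (ContinuousLinearMap.apply ℝ ℝ (Pi.single a 1 : Pt n)).contDiff.comp h1

lemma diff_pd {f : Pt n → ℝ} (hf : ContDiff ℝ (⊤ : ℕ∞) f) (a : Fin n) :
    Differentiable ℝ (fun x => pd a f x) :=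
  (contDiff_pd hf a).differentiable (by simp)

lemma pd_schwarz {f : Pt n → ℝ} (hf : ContDiff ℝ (⊤ : ℕ∞) f) (a b : Fin n) (x : Pt n) :
    pd a (fun y => pd b f y) x = pd b (fun y => pd a f y) x := by
  have hsym : IsSymmSndFDerivAt ℝ f x := (hf.contDiffAt).isSymmSndFDerivAt (by simp; exact le_trans (by norm_num : (2:WithTop ℕ∞) ≤ ((2:ℕ∞) : WithTop ℕ∞)) (WithTop.coe_le_coe.2 le_top))
  have hdf : Differentiable ℝ (fderiv ℝ f) := (hf.fderiv_right (m := (⊤ : ℕ∞)) (by simp)).differentiable (by simp)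
  have key : ∀ c d : Fin n, pd c (fun y => pd d f y) x
      = fderiv ℝ (fderiv ℝ f) x (Pi.single c 1) (Pi.single d 1) := by
    intro c d
    have h1 : HasFDerivAt (fderiv ℝ f) (fderiv ℝ (fderiv ℝ f) x) x := (hdf x).hasFDerivAt
    have h2 : HasFDerivAt (fun y => fderiv ℝ f y (Pi.single d 1 : Pt n))
        ((ContinuousLinearMap.apply ℝ ℝ (Pi.single d 1 : Pt n)).comp
          (fderiv ℝ (fderiv ℝ f) x)) x :=
      ((ContinuousLinearMap.apply ℝ ℝ (Pi.single d 1 : Pt n)).hasFDerivAt).comp x h1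
    simp [pd, h2.fderiv]
  rw [key a b, key b a]
  exact hsym (Pi.single a 1) (Pi.single b 1)

lemma diff_prod {ι : Type*} [DecidableEq ι] (s : Finset ι) (F : ι → Pt n → ℝ)
    (h : ∀ i, Differentiable ℝ (F i)) :
    Differentiable ℝ (fun x => ∏ i ∈ s, F i x) := by
  classical
  induction s using Finset.induction with
  | empty => simpa using differentiable_const (1:ℝ)
  | @insert i s hi ih =>
    have : (fun x => ∏ j ∈ insert i s, F j x) = fun x => F i x * ∏ j ∈ s, F j x := by
      funext x; exact Finset.prod_insert hi
    rw [this]; exact (h i).mul ih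

lemma det_diff (M : Pt n → Matrix (Fin n) (Fin n) ℝ)
    (h : ∀ a b, Differentiable ℝ fun x => M x a b) :
    Differentiable ℝ fun x => (M x).det := by
  classical
  have : (fun x => (M x).det)
      = fun x => ∑ σ : Equiv.Perm (Fin n), ((Equiv.Perm.sign σ : ℤ) : ℝ) *
          ∏ i, M x (σ i) i := by
    funext x
    rw [Matrix.det_apply]
    refine Finset.sum_congr rfl fun σ _ => ?_
    rw [Units.smul_def, zsmul_eq_mul]
  rw [this]
  refine Differentiable.fun_sum fun σ _ => Differentiable.const_mul ?_ _
  exact diff_prod _ _ fun i => h (σ i) i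

end Aux

section Aux2
open Finset Matrix

variable {n : ℕ} (G : MetricG n)

lemma g_diff (a b : Fin n) : Differentiable ℝ fun x => G.g x a b :=
  (G.smooth a b).differentiable (by simp)

/-- The metric as a matrix. -/
def gmat (x : Pt n) : Matrix (Fin n) (Fin n) ℝ := Matrix.of fun a b => G.g x a b

/-- The inverse metric as a matrix. -/
def gimat (x : Pt n) : Matrix (Fin n) (Fin n) ℝ := Matrix.of fun a b => G.ginv x a b

lemma gimat_mul_gmat (x : Pt n) : gimat G x * gmat G x = 1 := by
  ext a c
  simpa [Matrix.mul_apply, gmat, gimat, Matrix.one_apply] using G.inv_mul x a c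

lemma gmat_mul_gimat (x : Pt n) : gmat G x * gimat G x = 1 :=
  mul_eq_one_comm.2 (gimat_mul_gmat G x)

lemma gimat_eq (x : Pt n) : gimat G x = (gmat G x)⁻¹ :=
  (Matrix.inv_eq_left_inv (gimat_mul_gmat G x)).symm

lemma g_mul_inv (x : Pt n) (a c : Fin n) :
    (∑ b, G.g x a b * G.ginv x b c) = if a = c then (1:ℝ) else 0 := by
  have h := congrFun (congrFun (gmat_mul_gimat G x) a) c
  simpa [Matrix.mul_apply, gmat, gimat, Matrix.one_apply] using h

lemma ginv_symm (x : Pt n) (a b : Fin n) : G.ginv x a b = G.ginv x b a := by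
  have h2 : (gmat G x)ᵀ = gmat G x := by
    ext i j; simp [gmat, Matrix.transpose_apply]; exact (G.symm x j i)
  have h3 : (gimat G x)ᵀ = gimat G x := by
    rw [gimat_eq, Matrix.transpose_nonsing_inv, h2]

  have := congrFun (congrFun h3 b) a
  simpa [Matrix.transpose_apply, gimat] using this

lemma det_ne (x : Pt n) : (gmat G x).det ≠ 0 :=
  (Matrix.isUnit_det_of_left_inverse (gimat_mul_gmat G x)).ne_zero

lemma ginv_diff (a b : Fin n) : Differentiable ℝ fun x => G.ginv x a b := by
  classical
  have hdet : Differentiable ℝ fun x => (gmat G x).det :=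
    det_diff _ (fun a b => g_diff G a b)
  have hadj : Differentiable ℝ fun x => (gmat G x).adjugate a b := by
    have : (fun x => (gmat G x).adjugate a b)
        = fun x => ((gmat G x).updateRow b (Pi.single a 1)).det := by
      funext x; rw [Matrix.adjugate_apply]
    rw [this]
    refine det_diff _ (fun i j => ?_)
    by_cases h : i = b
    · subst h
      simpa [Matrix.updateRow_apply] using differentiable_const (Pi.single a (1:ℝ) j)
    · simpa [Matrix.updateRow_apply, h, gmat] using g_diff G i j
  have hval : (fun x => G.ginv x a b)
      = fun x => ((gmat G x).det)⁻¹ * (gmat G x).adjugate a b := by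
    funext x
    have h1 := congrFun (congrFun (gimat_eq G x) a) b
    rw [Matrix.inv_def] at h1
    simpa [gimat, Matrix.smul_apply, Ring.inverse_eq_inv', smul_eq_mul] using h1
  rw [hval]
  exact (hdet.inv (det_ne G)).mul hadj

end Aux2

section Aux3
open Finset

variable {n : ℕ} (G : MetricG n)

lemma Γ_symm (x : Pt n) (c a b : Fin n) : G.Γ c a b x = G.Γ c b a x := by
  unfold MetricG.Γ
  congr 1
  refine Finset.sum_congr rfl fun d _ => ?_
  rw [pd_congr (fun y => G.symm y a b) d x]
  ring

lemma Γ_diff (c a b : Fin n) : Differentiable ℝ fun x => G.Γ c a b x := by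
  unfold MetricG.Γ
  refine Differentiable.const_mul (Differentiable.fun_sum fun d _ => ?_) _
  exact (ginv_diff G c d).mul
    (((diff_pd (G.smooth d b) a).add (diff_pd (G.smooth d a) b)).sub (diff_pd (G.smooth a b) d))

/-- Lowered Christoffel symbol Γ_{c,ab}. -/
def Lo (c a b : Fin n) (x : Pt n) : ℝ :=
  (1/2) * (pd a (fun y => G.g y c b) x + pd b (fun y => G.g y c a) x
    - pd c (fun y => G.g y a b) x)

lemma Lo_diff (c a b : Fin n) : Differentiable ℝ fun x => Lo G c a b x := by
  unfold Lo
  exact Differentiable.const_mul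
    (((diff_pd (G.smooth c b) a).add (diff_pd (G.smooth c a) b)).sub
      (diff_pd (G.smooth a b) c)) _

lemma sum_g_Γ (x : Pt n) (c a b : Fin n) :
    (∑ e, G.g x c e * G.Γ e a b x) = Lo G c a b x := by
  unfold MetricG.Γ Lo
  have h1 : ∀ e, G.g x c e * ((1/2 : ℝ) * ∑ d, G.ginv x e d *
      (pd a (fun y => G.g y d b) x + pd b (fun y => G.g y d a) x - pd d (fun y => G.g y a b) x))
      = ∑ d, (1/2 : ℝ) * (G.g x c e * G.ginv x e d) *
      (pd a (fun y => G.g y d b) x + pd b (fun y => G.g y d a) x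
        - pd d (fun y => G.g y a b) x) := by
    intro e
    rw [Finset.mul_sum, Finset.mul_sum]
    exact Finset.sum_congr rfl fun d _ => by ring
  calc (∑ e, G.g x c e * ((1/2 : ℝ) * ∑ d, G.ginv x e d *
        (pd a (fun y => G.g y d b) x + pd b (fun y => G.g y d a) x
          - pd d (fun y => G.g y a b) x)))
      = ∑ e, ∑ d, (1/2 : ℝ) * (G.g x c e * G.ginv x e d) *
        (pd a (fun y => G.g y d b) x + pd b (fun y => G.g y d a) x
          - pd d (fun y => G.g y a b) x) := Finset.sum_congr rfl fun e _ => h1 e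
    _ = ∑ d, ∑ e, (1/2 : ℝ) * (G.g x c e * G.ginv x e d) *
        (pd a (fun y => G.g y d b) x + pd b (fun y => G.g y d a) x
          - pd d (fun y => G.g y a b) x) := Finset.sum_comm
    _ = ∑ d, (1/2 : ℝ) * (∑ e, G.g x c e * G.ginv x e d) *
        (pd a (fun y => G.g y d b) x + pd b (fun y => G.g y d a) x
          - pd d (fun y => G.g y a b) x) := by
        refine Finset.sum_congr rfl fun d _ => ?_
        rw [mul_comm ((1/2 : ℝ)) _, Finset.sum_mul, Finset.sum_mul]
        refine Finset.sum_congr rfl fun e _ => by ring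
    _ = (1/2 : ℝ) * (pd a (fun y => G.g y c b) x + pd b (fun y => G.g y c a) x
          - pd c (fun y => G.g y a b) x) := by
        rw [Finset.sum_congr rfl (fun d _ => by rw [g_mul_inv G x c d])]
        simp

lemma pdg (x : Pt n) (a c e : Fin n) :
    pd a (fun y => G.g y c e) x = Lo G c a e x + Lo G e a c x := by
  unfold Lo
  rw [pd_congr (fun y => G.symm y e c) a x, pd_congr (fun y => G.symm y e a) c x,
    pd_congr (fun y => G.symm y a c) e x]
  ring

end Aux3

section Aux4
open Finset

variable {n : ℕ} (G : MetricG n)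

lemma riem_antisym (x : Pt n) (a b c d : Fin n) :
    G.Riem a b c d x = - G.Riem b a c d x := by
  unfold MetricG.Riem
  have : (∑ e, (G.Γ c a e x * G.Γ e b d x - G.Γ c b e x * G.Γ e a d x))
      = - ∑ e, (G.Γ c b e x * G.Γ e a d x - G.Γ c a e x * G.Γ e b d x) := by
    rw [← Finset.sum_neg_distrib]
    exact Finset.sum_congr rfl fun e _ => by ring
  rw [this]; ring

lemma riem_bianchi (x : Pt n) (a b c d : Fin n) :
    G.Riem a b c d x + G.Riem b d c a x + G.Riem d a c b x = 0 := by
  unfold MetricG.Riem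
  have h1 : pd a (fun y => G.Γ c d b y) x = pd a (fun y => G.Γ c b d y) x :=
    pd_congr (fun y => Γ_symm G y c d b) a x
  have h2 : pd b (fun y => G.Γ c d a y) x = pd b (fun y => G.Γ c a d y) x :=
    pd_congr (fun y => Γ_symm G y c d a) b x
  have h3 : pd d (fun y => G.Γ c b a y) x = pd d (fun y => G.Γ c a b y) x :=
    pd_congr (fun y => Γ_symm G y c b a) d x
  have hsum : (∑ e, (G.Γ c a e x * G.Γ e b d x - G.Γ c b e x * G.Γ e a d x))
      + (∑ e, (G.Γ c b e x * G.Γ e d a x - G.Γ c d e x * G.Γ e b a x))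
      + (∑ e, (G.Γ c d e x * G.Γ e a b x - G.Γ c a e x * G.Γ e d b x)) = 0 := by
    rw [← Finset.sum_add_distrib, ← Finset.sum_add_distrib]
    refine Finset.sum_eq_zero fun e _ => ?_
    rw [Γ_symm G x e b d, Γ_symm G x e d a, Γ_symm G x e b a]
    ring
  rw [h1, h2, h3] at *
  linarith [hsum]

end Aux4

section Aux5
open Finset

variable {n : ℕ} (G : MetricG n)

lemma sum_g_ΓΓ (x : Pt n) (c u v w : Fin n) :
    (∑ e, G.g x c e * ∑ f, G.Γ e u f x * G.Γ f v w x)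
      = ∑ f, Lo G c u f x * G.Γ f v w x := by
  have h1 : (∑ e, G.g x c e * ∑ f, G.Γ e u f x * G.Γ f v w x)
      = ∑ e, ∑ f, G.g x c e * G.Γ e u f x * G.Γ f v w x := by
    refine Finset.sum_congr rfl fun e _ => ?_
    rw [Finset.mul_sum]
    exact Finset.sum_congr rfl fun f _ => by ring
  rw [h1, Finset.sum_comm]
  refine Finset.sum_congr rfl fun f _ => ?_
  rw [← sum_g_Γ G x c u f, Finset.sum_mul]

lemma sum_Lo_Γ (x : Pt n) (a b u v : Fin n) :
    (∑ e, Lo G e a b x * G.Γ e u v x) = ∑ e, Lo G e u v x * G.Γ e a b x := by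
  have h1 : (∑ e, Lo G e a b x * G.Γ e u v x)
      = ∑ e, ∑ f, G.g x e f * G.Γ f a b x * G.Γ e u v x := by
    refine Finset.sum_congr rfl fun e _ => ?_
    rw [← sum_g_Γ G x e a b, Finset.sum_mul]
  rw [h1, Finset.sum_comm]
  refine Finset.sum_congr rfl fun f _ => ?_
  rw [← sum_g_Γ G x f u v, Finset.sum_mul]
  refine Finset.sum_congr rfl fun e _ => ?_
  rw [G.symm x e f]
  ring

lemma sum_g_pdΓ (x : Pt n) (u c v w : Fin n) :
    (∑ e, G.g x c e * pd u (fun y => G.Γ e v w y) x)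
      = pd u (fun y => Lo G c v w y) x
        - ∑ e, (Lo G c u e x + Lo G e u c x) * G.Γ e v w x := by
  have h1 : pd u (fun y => Lo G c v w y) x
      = ∑ e, (pd u (fun y => G.g y c e) x * G.Γ e v w x
          + G.g x c e * pd u (fun y => G.Γ e v w y) x) := by
    rw [pd_congr (fun y => (sum_g_Γ G y c v w).symm) u x]
    rw [pd_sum _ _ u x (fun e _ =>
      ((g_diff G c e x).fun_mul ((Γ_diff G e v w) x)))]
    exact Finset.sum_congr rfl fun e _ =>
      pd_mul u x (g_diff G c e x) ((Γ_diff G e v w) x)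
  have h2 : ∀ e, pd u (fun y => G.g y c e) x = Lo G c u e x + Lo G e u c x :=
    fun e => pdg G x u c e
  rw [h1, Finset.sum_add_distrib]
  rw [Finset.sum_congr rfl (fun e _ => by rw [h2 e] :
    ∀ e ∈ Finset.univ, pd u (fun y => G.g y c e) x * G.Γ e v w x
      = (Lo G c u e x + Lo G e u c x) * G.Γ e v w x)]
  ring

lemma riem4_eq (x : Pt n) (a b c d : Fin n) :
    G.Riem4 a b c d x
      = (∑ e, G.g x c e * pd a (fun y => G.Γ e b d y) x)
        - (∑ e, G.g x c e * pd b (fun y => G.Γ e a d y) x)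
        + (∑ f, Lo G c a f x * G.Γ f b d x)
        - (∑ f, Lo G c b f x * G.Γ f a d x) := by
  unfold MetricG.Riem4 MetricG.Riem
  have h1 : ∀ e : Fin n, G.g x c e * (pd a (fun y => G.Γ e b d y) x
        - pd b (fun y => G.Γ e a d y) x
        + ∑ f, (G.Γ e a f x * G.Γ f b d x - G.Γ e b f x * G.Γ f a d x))
      = G.g x c e * pd a (fun y => G.Γ e b d y) x
        - G.g x c e * pd b (fun y => G.Γ e a d y) x
        + (G.g x c e * ∑ f, G.Γ e a f x * G.Γ f b d x
            - G.g x c e * ∑ f, G.Γ e b f x * G.Γ f a d x) := by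
    intro e
    rw [Finset.sum_sub_distrib]
    ring
  rw [Finset.sum_congr rfl fun e _ => h1 e]
  rw [Finset.sum_add_distrib, Finset.sum_sub_distrib, Finset.sum_sub_distrib]
  rw [sum_g_ΓΓ G x c a b d, sum_g_ΓΓ G x c b a d]
  ring

lemma riem4_antisym2 (x : Pt n) (a b c d : Fin n) :
    G.Riem4 a b c d x = - G.Riem4 a b d c x := by
  rw [riem4_eq G x a b c d, riem4_eq G x a b d c]
  rw [sum_g_pdΓ G x a c b d, sum_g_pdΓ G x b c a d,
      sum_g_pdΓ G x a d b c, sum_g_pdΓ G x b d a c]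
  have hsplit : ∀ (c' u : Fin n) (v w : Fin n),
      (∑ e, (Lo G c' u e x + Lo G e u c' x) * G.Γ e v w x)
        = (∑ e, Lo G c' u e x * G.Γ e v w x) + ∑ e, Lo G e u c' x * G.Γ e v w x := by
    intro c' u v w
    rw [← Finset.sum_add_distrib]
    exact Finset.sum_congr rfl fun e _ => by ring
  rw [hsplit c a b d, hsplit c b a d, hsplit d a b c, hsplit d b a c]
  have hLo1 : pd a (fun y => Lo G c b d y) x + pd a (fun y => Lo G d b c y) x
      = pd a (fun y => pd b (fun z => G.g z c d) y) x := by
    rw [← pd_add a x ((Lo_diff G c b d) x) ((Lo_diff G d b c) x)]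
    exact pd_congr (fun y => (pdg G y b c d).symm) a x
  have hLo2 : pd b (fun y => Lo G c a d y) x + pd b (fun y => Lo G d a c y) x
      = pd b (fun y => pd a (fun z => G.g z c d) y) x := by
    rw [← pd_add b x ((Lo_diff G c a d) x) ((Lo_diff G d a c) x)]
    exact pd_congr (fun y => (pdg G y a c d).symm) b x
  have hsch : pd a (fun y => pd b (fun z => G.g z c d) y) x
      = pd b (fun y => pd a (fun z => G.g z c d) y) x :=
    pd_schwarz (G.smooth c d) a b x
  have hswap1 : (∑ e, Lo G e a c x * G.Γ e b d x) = ∑ e, Lo G e b d x * G.Γ e a c x :=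
    sum_Lo_Γ G x a c b d
  have hswap2 : (∑ e, Lo G e b c x * G.Γ e a d x) = ∑ e, Lo G e a d x * G.Γ e b c x :=
    sum_Lo_Γ G x b c a d
  linarith [hLo1, hLo2, hsch, hswap1, hswap2]

end Aux5

section Aux6
open Finset

variable {n : ℕ} (G : MetricG n)

lemma riem4_antisym1 (x : Pt n) (a b c d : Fin n) :
    G.Riem4 a b c d x = - G.Riem4 b a c d x := by
  unfold MetricG.Riem4
  rw [← Finset.sum_neg_distrib]
  exact Finset.sum_congr rfl fun e _ => by rw [riem_antisym G x a b e d]; ring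

lemma riem4_bianchi (x : Pt n) (a b c d : Fin n) :
    G.Riem4 a b c d x + G.Riem4 b d c a x + G.Riem4 d a c b x = 0 := by
  unfold MetricG.Riem4
  rw [← Finset.sum_add_distrib, ← Finset.sum_add_distrib]
  refine Finset.sum_eq_zero fun e _ => ?_
  rw [← mul_add, ← mul_add, riem_bianchi G x a b e d, mul_zero]

lemma riem4_pair (x : Pt n) (a b c d : Fin n) :
    G.Riem4 a b c d x = G.Riem4 c d a b x := by
  linarith [riem4_bianchi G x c d a b, riem4_bianchi G x d a b c,
    riem4_bianchi G x a b c d, riem4_bianchi G x b c d a,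
    riem4_antisym1 G x c a d b,
    riem4_antisym1 G x d a b c,
    riem4_antisym1 G x d a c b,
    riem4_antisym1 G x d b a c,
    riem4_antisym2 G x a b d c,
    riem4_antisym2 G x a c d b,
    riem4_antisym2 G x a d c b,
    riem4_antisym2 G x b c d a,
    riem4_antisym2 G x b d c a,
    riem4_antisym2 G x c d b a]

end Aux6

section Aux7
open Finset

variable {n : ℕ} (G : MetricG n)

lemma ricci_eq (x : Pt n) (b d : Fin n) :
    G.Ricci b d x = ∑ c, ∑ e, G.ginv x c e * G.Riem4 c b e d x := by
  unfold MetricG.Ricci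
  refine Finset.sum_congr rfl fun c _ => ?_
  unfold MetricG.Riem4
  have h1 : (∑ e, G.ginv x c e * ∑ h, G.g x e h * G.Riem c b h d x)
      = ∑ e, ∑ h, (G.ginv x c e * G.g x e h) * G.Riem c b h d x := by
    refine Finset.sum_congr rfl fun e _ => ?_
    rw [Finset.mul_sum]
    exact Finset.sum_congr rfl fun h _ => by ring
  rw [h1, Finset.sum_comm]
  have h2 : ∀ h, (∑ e, (G.ginv x c e * G.g x e h) * G.Riem c b h d x)
      = (if c = h then (1:ℝ) else 0) * G.Riem c b h d x := by
    intro h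
    rw [← Finset.sum_mul, G.inv_mul x c h]
  rw [Finset.sum_congr rfl fun h _ => h2 h]
  simp

lemma ricci_symm (x : Pt n) (b d : Fin n) : G.Ricci b d x = G.Ricci d b x := by
  rw [ricci_eq G x b d, ricci_eq G x d b]
  have h1 : ∀ c e, G.ginv x c e * G.Riem4 c b e d x
      = G.ginv x e c * G.Riem4 e d c b x := by
    intro c e
    rw [riem4_pair G x c b e d, ginv_symm G x c e]
  calc (∑ c, ∑ e, G.ginv x c e * G.Riem4 c b e d x)
      = ∑ c, ∑ e, G.ginv x e c * G.Riem4 e d c b x :=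
        Finset.sum_congr rfl fun c _ => Finset.sum_congr rfl fun e _ => h1 c e
    _ = ∑ e, ∑ c, G.ginv x e c * G.Riem4 e d c b x := Finset.sum_comm
    _ = ∑ c, ∑ e, G.ginv x c e * G.Riem4 c d e b x := rfl

variable (K : Pt n → Pt n) (f : Pt n → Fin n → ℝ)

lemma riem_contract_K (hKs : SmoothVF K) (hfs : SmoothForm f)
    (hray : G.ParallelRays K f) (x : Pt n) (a b c : Fin n) :
    (∑ e, G.Riem a b c e x * K x e)
      = (pd a (fun y => f y b) x - pd b (fun y => f y a) x) * K x c := by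
  classical
  have hKfun : ∀ (u c' : Fin n), ∀ y, pd u (fun z => K z c') y
      = f y u * K y c' - ∑ e, G.Γ c' u e y * K y e := by
    intro u c' y
    have h := hray y u c'
    unfold MetricG.covVec at h
    linarith [h]
  have hKd : ∀ e, Differentiable ℝ fun y => K y e := fun e => (hKs e).differentiable (by simp)
  have hfd : ∀ u, Differentiable ℝ fun y => f y u := fun u => (hfs u).differentiable (by simp)
  have hsum_d : ∀ c' u, Differentiable ℝ fun y => ∑ e, G.Γ c' u e y * K y e :=
    fun c' u => Differentiable.fun_sum fun e _ => (Γ_diff G c' u e).mul (hKd e)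
  have E : ∀ (u v : Fin n), pd u (fun y => pd v (fun z => K z c) y) x
      = pd u (fun y => f y v) x * K x c + f x v * pd u (fun z => K z c) x
        - (∑ e, pd u (fun y => G.Γ c v e y) x * K x e)
        - (∑ e, G.Γ c v e x * pd u (fun z => K z e) x) := by
    intro u v
    rw [pd_congr (hKfun v c) u x]
    rw [pd_sub u x (((hfd v) x).fun_mul ((hKd c) x)) ((hsum_d c v) x)]
    rw [pd_mul u x ((hfd v) x) ((hKd c) x)]
    rw [pd_sum _ _ u x (fun e _ => ((Γ_diff G c v e) x).fun_mul ((hKd e) x))]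
    rw [Finset.sum_congr rfl fun e _ => pd_mul u x ((Γ_diff G c v e) x) ((hKd e) x)]
    rw [Finset.sum_add_distrib]
    ring
  have ES : pd a (fun y => pd b (fun z => K z c) y) x
      = pd b (fun y => pd a (fun z => K z c) y) x := pd_schwarz (hKs c) a b x
  have master : pd a (fun y => f y b) x * K x c + f x b * pd a (fun z => K z c) x
        - (∑ e, pd a (fun y => G.Γ c b e y) x * K x e)
        - (∑ e, G.Γ c b e x * pd a (fun z => K z e) x)
      = pd b (fun y => f y a) x * K x c + f x a * pd b (fun z => K z c) x
        - (∑ e, pd b (fun y => G.Γ c a e y) x * K x e)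
        - (∑ e, G.Γ c a e x * pd b (fun z => K z e) x) := by
    rw [← E a b, ← E b a]; exact ES
  have hQ : ∀ (u v : Fin n), (∑ e, G.Γ c v e x * pd u (fun z => K z e) x)
      = f x u * (∑ e, G.Γ c v e x * K x e)
        - ∑ e, ∑ h, G.Γ c v e x * G.Γ e u h x * K x h := by
    intro u v
    have h1 : ∀ e, G.Γ c v e x * pd u (fun z => K z e) x
        = f x u * (G.Γ c v e x * K x e) - ∑ h, G.Γ c v e x * G.Γ e u h x * K x h := by
      intro e
      rw [hKfun u e x, mul_sub, Finset.mul_sum]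
      have : G.Γ c v e x * (f x u * K x e) = f x u * (G.Γ c v e x * K x e) := by ring
      rw [this]
      congr 1
      exact Finset.sum_congr rfl fun h _ => by ring
    rw [Finset.sum_congr rfl fun e _ => h1 e, Finset.sum_sub_distrib, ← Finset.mul_sum]
  have hGoal : (∑ e, G.Riem a b c e x * K x e)
      = (∑ e, pd a (fun y => G.Γ c b e y) x * K x e)
        - (∑ e, pd b (fun y => G.Γ c a e y) x * K x e)
        + (∑ e, ∑ h, G.Γ c a h x * G.Γ h b e x * K x e)
        - (∑ e, ∑ h, G.Γ c b h x * G.Γ h a e x * K x e) := by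
    unfold MetricG.Riem
    have h1 : ∀ e, (pd a (fun y => G.Γ c b e y) x - pd b (fun y => G.Γ c a e y) x
          + ∑ h, (G.Γ c a h x * G.Γ h b e x - G.Γ c b h x * G.Γ h a e x)) * K x e
        = pd a (fun y => G.Γ c b e y) x * K x e - pd b (fun y => G.Γ c a e y) x * K x e
          + ((∑ h, G.Γ c a h x * G.Γ h b e x * K x e)
              - ∑ h, G.Γ c b h x * G.Γ h a e x * K x e) := by
      intro e
      rw [Finset.sum_sub_distrib, add_mul, sub_mul, sub_mul, Finset.sum_mul, Finset.sum_mul]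
    rw [Finset.sum_congr rfl fun e _ => h1 e]
    rw [Finset.sum_add_distrib, Finset.sum_sub_distrib, Finset.sum_sub_distrib]
    ring
  have hsw1 : (∑ e, ∑ h, G.Γ c a h x * G.Γ h b e x * K x e)
      = ∑ e, ∑ h, G.Γ c a e x * G.Γ e b h x * K x h := Finset.sum_comm
  have hsw2 : (∑ e, ∑ h, G.Γ c b h x * G.Γ h a e x * K x e)
      = ∑ e, ∑ h, G.Γ c b e x * G.Γ e a h x * K x h := Finset.sum_comm
  have hP1 : pd a (fun z => K z c) x = f x a * K x c - ∑ e, G.Γ c a e x * K x e :=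
    hKfun a c x
  have hP2 : pd b (fun z => K z c) x = f x b * K x c - ∑ e, G.Γ c b e x * K x e :=
    hKfun b c x
  rw [hGoal]
  linear_combination -master + (f x b) * hP1 - (f x a) * hP2 - hQ a b + hQ b a + hsw1 - hsw2

end Aux7

section Aux8
open Finset

variable {n : ℕ} (G : MetricG n)

lemma sum_single_mul (v : Fin n → ℝ) (a : Fin n) :
    (∑ b, v b * (Pi.single a 1 : Pt n) b) = v a := by
  classical
  have h : ∀ b, v b * (Pi.single a 1 : Pt n) b = if b = a then v b else 0 := by
    intro b
    by_cases hb : b = a <;> simp [Pi.single_apply, hb]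
  rw [Finset.sum_congr rfl fun b _ => h b]
  simp

lemma riem4_contract_K (K : Pt n → Pt n) (f : Pt n → Fin n → ℝ)
    (hKs : SmoothVF K) (hfs : SmoothForm f) (hray : G.ParallelRays K f)
    (x : Pt n) (a b c : Fin n) :
    (∑ e, G.Riem4 a b c e x * K x e)
      = (pd a (fun y => f y b) x - pd b (fun y => f y a) x)
          * ∑ h, G.g x h c * K x h := by
  unfold MetricG.Riem4
  have h1 : (∑ e, (∑ h, G.g x c h * G.Riem a b h e x) * K x e)
      = ∑ e, ∑ h, G.g x c h * G.Riem a b h e x * K x e := by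
    refine Finset.sum_congr rfl fun e _ => ?_
    rw [Finset.sum_mul]
  rw [h1, Finset.sum_comm]
  have h2 : ∀ h, (∑ e, G.g x c h * G.Riem a b h e x * K x e)
      = G.g x c h * ((pd a (fun y => f y b) x - pd b (fun y => f y a) x) * K x h) := by
    intro h
    have h3 : (∑ e, G.g x c h * G.Riem a b h e x * K x e)
        = G.g x c h * ∑ e, G.Riem a b h e x * K x e := by
      rw [Finset.mul_sum]
      exact Finset.sum_congr rfl fun e _ => by ring
    rw [h3, riem_contract_K G K f hKs hfs hray x a b h]
  rw [Finset.sum_congr rfl fun h _ => h2 h, Finset.mul_sum]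
  refine Finset.sum_congr rfl fun h _ => ?_
  rw [G.symm x h c]
  ring

end Aux8


/-- Weyl condition for aligned pure radiation: If g is a pure radiation
metric with parallel rays spanned by K, then its Weyl tensor satisfies
C_{abcd} K^a X^b = 0 for all vector fields X orthogonal to K. -/
theorem stmt_6 {n : ℕ} (hn : 4 ≤ n) (G : MetricG n) (K : Pt n → Pt n) (f : Pt n → Fin n → ℝ)
    (hKs : SmoothVF K) (hfs : SmoothForm f) (hK0 : ∀ x, K x ≠ 0) (hnull : G.IsNull K)
    (hpr : G.PureRadiation K) (hray : G.ParallelRays K f) :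
    ∀ x (X : Pt n), G.ip x (K x) X = 0 → ∀ c d,
      (∑ a, ∑ b, G.Weyl a b c d x * K x a * X b) = 0 := by
    classical
  intro x X hX c d
  set κ : Fin n → ℝ := fun b => ∑ a, G.g x a b * K x a with hκdef
  have hipY : ∀ Y : Pt n, G.ip x (K x) Y = ∑ b, κ b * Y b := by
    intro Y
    unfold MetricG.ip
    rw [Finset.sum_comm]
    refine Finset.sum_congr rfl fun b _ => ?_
    rw [hκdef, Finset.sum_mul]
  have hκX : (∑ b, κ b * X b) = 0 := by rw [← hipY]; exact hX
  have hκK : (∑ b, κ b * K x b) = 0 := by rw [← hipY]; exact hnull x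
  have hKrec : ∀ c', K x c' = ∑ b, G.ginv x c' b * κ b := by
    intro c'
    have h1 : ∀ b, G.ginv x c' b * κ b = ∑ a, G.ginv x c' b * G.g x b a * K x a := by
      intro b
      rw [hκdef, Finset.mul_sum]
      exact Finset.sum_congr rfl fun a _ => by rw [G.symm x a b]; ring
    rw [Finset.sum_congr rfl fun b _ => h1 b, Finset.sum_comm]
    have h2 : ∀ a, (∑ b, G.ginv x c' b * G.g x b a * K x a)
        = (if c' = a then (1:ℝ) else 0) * K x a := by
      intro a
      rw [← G.inv_mul x c' a, Finset.sum_mul]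
    rw [Finset.sum_congr rfl fun a _ => h2 a]
    simp
  have hκne : ∃ i0, κ i0 ≠ 0 := by
    by_contra hc
    push_neg at hc
    apply hK0 x
    funext c'
    rw [hKrec c']
    simp [hc]
  obtain ⟨i0, hi0⟩ := hκne
  -- structure of Ricci
  have hstruct : ∀ a b, κ i0 * G.Ricci a b x - κ a * G.Ricci i0 b x = 0 := by
    intro a b
    set X' : Pt n := fun j => κ i0 * (Pi.single a 1 : Pt n) j - κ a * (Pi.single i0 1 : Pt n) j with hX'
    have hOrth : G.ip x (K x) X' = 0 := by
      rw [hipY X']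
      have h1 : ∀ j, κ j * X' j = κ i0 * (κ j * (Pi.single a 1 : Pt n) j)
          - κ a * (κ j * (Pi.single i0 1 : Pt n) j) := fun j => by rw [hX']; ring
      rw [Finset.sum_congr rfl fun j _ => h1 j, Finset.sum_sub_distrib,
        ← Finset.mul_sum, ← Finset.mul_sum, sum_single_mul, sum_single_mul]
      ring
    have h2 := hpr x X' hOrth b
    have h3 : ∀ j, G.Ricci j b x * X' j
        = κ i0 * (G.Ricci j b x * (Pi.single a 1 : Pt n) j)
          - κ a * (G.Ricci j b x * (Pi.single i0 1 : Pt n) j) := fun j => by rw [hX']; ring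
    rw [Finset.sum_congr rfl fun j _ => h3 j, Finset.sum_sub_distrib,
      ← Finset.mul_sum, ← Finset.mul_sum, sum_single_mul, sum_single_mul] at h2
    linarith [h2]
  have hRic0 : ∀ a b, G.Ricci a b x = κ a * (G.Ricci i0 b x / κ i0) := by
    intro a b
    have := hstruct a b
    field_simp
    linarith [this]
  have hRic : ∀ a b, G.Ricci a b x = (G.Ricci i0 i0 x / (κ i0 * κ i0)) * κ a * κ b := by
    intro a b
    have h1 := hRic0 a b
    have h2 : G.Ricci i0 b x = κ b * (G.Ricci i0 i0 x / κ i0) := by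
      rw [ricci_symm G x i0 b]
      exact hRic0 b i0
    rw [h1, h2]
    field_simp
  set φ : ℝ := G.Ricci i0 i0 x / (κ i0 * κ i0) with hφ
  -- scalar curvature vanishes
  have hScal : G.Scal x = 0 := by
    unfold MetricG.Scal
    have h1 : ∀ a, (∑ b, G.ginv x a b * G.Ricci a b x)
        = (φ * κ a) * ∑ b, G.ginv x a b * κ b := by
      intro a
      rw [Finset.mul_sum]
      refine Finset.sum_congr rfl fun b _ => ?_
      rw [hRic a b]
      ring
    have h2 : ∀ a, (∑ b, G.ginv x a b * κ b) = K x a := by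
      intro a
      rw [hKrec a]
    have h3 : ∀ a, (φ * κ a) * (∑ b, G.ginv x a b * κ b) = φ * (κ a * K x a) := by
      intro a; rw [h2 a]; ring
    rw [Finset.sum_congr rfl fun a _ => h1 a, Finset.sum_congr rfl fun a _ => h3 a,
      ← Finset.mul_sum, hκK, mul_zero]
  -- Schouten contractions vanish
  have hSch : ∀ a b, G.Schouten a b x = (1 / ((n:ℝ) - 2)) * G.Ricci a b x := by
    intro a b
    unfold MetricG.Schouten
    rw [hScal]
    ring
  have hPX : ∀ e, (∑ b, G.Schouten b e x * X b) = 0 := by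
    intro e
    have h1 : ∀ b, G.Schouten b e x * X b
        = (1 / ((n:ℝ) - 2)) * (G.Ricci b e x * X b) := fun b => by rw [hSch b e]; ring
    rw [Finset.sum_congr rfl fun b _ => h1 b, ← Finset.mul_sum, hpr x X hX e, mul_zero]
  have hPK : ∀ e, (∑ b, G.Schouten b e x * K x b) = 0 := by
    intro e
    have h1 : ∀ b, G.Schouten b e x * K x b
        = (1 / ((n:ℝ) - 2)) * (G.Ricci b e x * K x b) := fun b => by rw [hSch b e]; ring
    rw [Finset.sum_congr rfl fun b _ => h1 b, ← Finset.mul_sum, hpr x (K x) (hnull x) e,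
      mul_zero]
  -- Riemann part vanishes
  have hS : (∑ a, ∑ b, G.Riem4 a b c d x * K x a * X b) = 0 := by
    have hflip : ∀ a b, G.Riem4 a b c d x = - G.Riem4 c d b a x := by
      intro a b
      rw [riem4_pair G x a b c d, riem4_antisym2 G x c d a b]
    have h1 : ∀ a, (∑ b, G.Riem4 a b c d x * K x a * X b)
        = ∑ b, -(G.Riem4 c d b a x * K x a * X b) := by
      intro a
      refine Finset.sum_congr rfl fun b _ => ?_
      rw [hflip a b]; ring
    rw [Finset.sum_congr rfl fun a _ => h1 a, Finset.sum_comm]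
    have h2 : ∀ b, (∑ a, -(G.Riem4 c d b a x * K x a * X b))
        = -((∑ a, G.Riem4 c d b a x * K x a) * X b) := by
      intro b
      rw [Finset.sum_mul, ← Finset.sum_neg_distrib]
    rw [Finset.sum_congr rfl fun b _ => h2 b]
    have h3 : ∀ b, (∑ a, G.Riem4 c d b a x * K x a)
        = (pd c (fun y => f y d) x - pd d (fun y => f y c) x) * κ b := by
      intro b
      rw [riem4_contract_K G K f hKs hfs hray x c d b]
    have h4 : ∀ b, -((∑ a, G.Riem4 c d b a x * K x a) * X b)
        = -((pd c (fun y => f y d) x - pd d (fun y => f y c) x)) * (κ b * X b) := by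
      intro b; rw [h3 b]; ring
    rw [Finset.sum_congr rfl fun b _ => h4 b, ← Finset.mul_sum, hκX, mul_zero]
  -- assemble
  have hT1 : (∑ a, ∑ b, G.g x c a * G.Schouten b d x * K x a * X b) = 0 := by
    have h1 : ∀ a, (∑ b, G.g x c a * G.Schouten b d x * K x a * X b)
        = (G.g x c a * K x a) * ∑ b, G.Schouten b d x * X b := by
      intro a
      rw [Finset.mul_sum]
      exact Finset.sum_congr rfl fun b _ => by ring
    have h2 : ∀ a : Fin n, (G.g x c a * K x a) * (∑ b, G.Schouten b d x * X b) = 0 := by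
      intro a; rw [hPX d]; ring
    rw [Finset.sum_congr rfl fun a _ => h1 a, Finset.sum_congr rfl fun a _ => h2 a]
    simp
  have hT2 : (∑ a, ∑ b, G.g x c b * G.Schouten a d x * K x a * X b) = 0 := by
    have h1 : ∀ a, (∑ b, G.g x c b * G.Schouten a d x * K x a * X b)
        = (G.Schouten a d x * K x a) * ∑ b, G.g x c b * X b := by
      intro a
      rw [Finset.mul_sum]
      exact Finset.sum_congr rfl fun b _ => by ring
    rw [Finset.sum_congr rfl fun a _ => h1 a, ← Finset.sum_mul, hPK d, zero_mul]
  have hT3 : (∑ a, ∑ b, G.g x d b * G.Schouten a c x * K x a * X b) = 0 := by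
    have h1 : ∀ a, (∑ b, G.g x d b * G.Schouten a c x * K x a * X b)
        = (G.Schouten a c x * K x a) * ∑ b, G.g x d b * X b := by
      intro a
      rw [Finset.mul_sum]
      exact Finset.sum_congr rfl fun b _ => by ring
    rw [Finset.sum_congr rfl fun a _ => h1 a, ← Finset.sum_mul, hPK c, zero_mul]
  have hT4 : (∑ a, ∑ b, G.g x d a * G.Schouten b c x * K x a * X b) = 0 := by
    have h1 : ∀ a, (∑ b, G.g x d a * G.Schouten b c x * K x a * X b)
        = (G.g x d a * K x a) * ∑ b, G.Schouten b c x * X b := by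
      intro a
      rw [Finset.mul_sum]
      exact Finset.sum_congr rfl fun b _ => by ring
    have h2 : ∀ a : Fin n, (G.g x d a * K x a) * (∑ b, G.Schouten b c x * X b) = 0 := by
      intro a; rw [hPX c]; ring
    rw [Finset.sum_congr rfl fun a _ => h1 a, Finset.sum_congr rfl fun a _ => h2 a]
    simp
  have hexp : (∑ a, ∑ b, G.Weyl a b c d x * K x a * X b)
      = (∑ a, ∑ b, G.Riem4 a b c d x * K x a * X b)
        - (∑ a, ∑ b, G.g x c a * G.Schouten b d x * K x a * X b)
        + (∑ a, ∑ b, G.g x c b * G.Schouten a d x * K x a * X b)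
        - (∑ a, ∑ b, G.g x d b * G.Schouten a c x * K x a * X b)
        + (∑ a, ∑ b, G.g x d a * G.Schouten b c x * K x a * X b) := by
    have hw : ∀ a b : Fin n, G.Weyl a b c d x * K x a * X b
        = G.Riem4 a b c d x * K x a * X b
          - G.g x c a * G.Schouten b d x * K x a * X b
          + G.g x c b * G.Schouten a d x * K x a * X b
          - G.g x d b * G.Schouten a c x * K x a * X b
          + G.g x d a * G.Schouten b c x * K x a * X b := by
      intro a b
      unfold MetricG.Weyl
      ring
    rw [Finset.sum_congr rfl fun a _ => Finset.sum_congr rfl fun b _ => hw a b]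
    simp only [Finset.sum_add_distrib, Finset.sum_sub_distrib]
  rw [hexp, hS, hT1, hT2, hT3, hT4]
  ring
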